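/- arXiv:2410.07483 — 3 statements merged into one kernel-verified Lean document; each statement's English description precedes it below -/
import Mathlib

section
/- Assume monotonicity. Then for every g ∈ {0,1,...,J}, e_g(X) = p_{J−g+1}(X) − p_{J−g}(X) P-almost surely; equivalently, for every z ∈ {1,...,J}, p_z(X) = Σ_{g=J−z+1}^J e_g(X) P-almost surely. -/
open MeasureTheory ProbabilityTheory

noncomputable section

namespace TruncationByDeath

variable {Ω : Type*} {𝒳 : Type*} [MeasurableSpace Ω] [MeasurableSpace 𝒳]

/-- The σ-algebra on `Ω` generated by the covariate map `X`. -/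
def mX (X : Ω → 𝒳) : MeasurableSpace Ω := MeasurableSpace.comap X inferInstance

/-- Real-valued indicator of the event `{Z = z}`. -/
def indic (Z : Ω → ℕ) (z : ℕ) : Ω → ℝ := fun ω => if Z ω = z then 1 else 0

/-- Observed survival status `S := ∑_z 1(Z=z) ⬝ S_z`. -/
def Sobs (J : ℕ) (Z : Ω → ℕ) (S : ℕ → Ω → ℝ) : Ω → ℝ :=
  fun ω => ∑ z ∈ Finset.Icc 1 J, indic Z z ω * S z ω

/-- Observed outcome `Y := ∑_z 1(Z=z) ⬝ Y_z`. -/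
def Yobs (J : ℕ) (Z : Ω → ℕ) (Y : ℕ → Ω → ℝ) : Ω → ℝ :=
  fun ω => ∑ z ∈ Finset.Icc 1 J, indic Z z ω * Y z ω

/-- Principal score `p_z(X) := E[S_z | σ(X)]`, with conventions `p_0 := 0` and `p_{J+1} := 1`. -/
def pscore (P : Measure Ω) (X : Ω → 𝒳) (S : ℕ → Ω → ℝ) (J : ℕ) (z : ℕ) : Ω → ℝ :=
  if z = 0 then fun _ => 0 else if z = J + 1 then fun _ => 1 else P[S z | mX X]

/-- Treatment probability `π_z := P(Z = z)`. -/
def piZ (P : Measure Ω) (Z : Ω → ℕ) (z : ℕ) : ℝ := (P {ω | Z ω = z}).toReal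

/-- Principal stratum variable `G := ∑_{z=1}^J S_z`. -/
def Gsum (J : ℕ) (S : ℕ → Ω → ℝ) : Ω → ℝ := fun ω => ∑ z ∈ Finset.Icc 1 J, S z ω

/-- Real-valued indicator of the event `{G = g}`. -/
def indG (J : ℕ) (S : ℕ → Ω → ℝ) (g : ℕ) : Ω → ℝ :=
  Set.indicator {ω | Gsum J S ω = (g : ℝ)} (fun _ => (1 : ℝ))

/-- Principal score of the stratum `g` : `e_g(X) := E[1(G=g) | σ(X)]`. -/
def eg (P : Measure Ω) (X : Ω → 𝒳) (J : ℕ) (S : ℕ → Ω → ℝ) (g : ℕ) : Ω → ℝ :=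
  P[indG J S g | mX X]

/-- Basic setup: measurability, ranges, values and integrability of the primitives. -/
structure Setup (P : Measure Ω) (J : ℕ) (X : Ω → 𝒳) (Z : Ω → ℕ)
    (S Y : ℕ → Ω → ℝ) : Prop where
  hJ : 2 ≤ J
  hX : Measurable X
  hZ : Measurable Z
  hZr : ∀ ω, Z ω ∈ Finset.Icc 1 J
  hSm : ∀ z, Measurable (S z)
  hS01 : ∀ z ω, S z ω = 0 ∨ S z ω = 1
  hYm : ∀ z, Measurable (Y z)
  hYint : ∀ z, Integrable (Y z) P

/-- Randomization : `Z` is independent of `(X, S_1,…,S_J, Y_1,…,Y_J)` and `π_z > 0` for all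
`z ∈ {1,…,J}`. -/
def Randomization (P : Measure Ω) (J : ℕ) (X : Ω → 𝒳) (Z : Ω → ℕ)
    (S Y : ℕ → Ω → ℝ) : Prop :=
  IndepFun Z (fun ω => (X ω, fun z => S z ω, fun z => Y z ω)) P ∧
    ∀ z ∈ Finset.Icc 1 J, 0 < piZ P Z z

/-- Monotonicity : `S_{z'} ≤ S_z` a.s. whenever `z' ≤ z`. -/
def Monotonicity (P : Measure Ω) (J : ℕ) (S : ℕ → Ω → ℝ) : Prop :=
  ∀ z ∈ Finset.Icc 1 J, ∀ z' ∈ Finset.Icc 1 J, z' ≤ z → ∀ᵐ ω ∂P, S z' ω ≤ S z ω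

/-- Principal ignorability. -/
def PrincipalIgnorability (P : Measure Ω) (J : ℕ) (X : Ω → 𝒳)
    (S Y : ℕ → Ω → ℝ) : Prop :=
  ∀ z ∈ Finset.Icc 1 J, ∀ g ∈ Finset.Icc (J - z + 1) J, ∀ g' ∈ Finset.Icc (J - z + 1) J,
    (fun ω => (P[fun ω' => Y z ω' * indG J S g ω' | mX X]) ω * eg P X J S g' ω)
      =ᵐ[P] fun ω => (P[fun ω' => Y z ω' * indG J S g' ω' | mX X]) ω * eg P X J S g ω

/-- Positivity : the principal scores are uniformly bounded away from zero. -/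
def Positivity (P : Measure Ω) (J : ℕ) (X : Ω → 𝒳) (S : ℕ → Ω → ℝ) : Prop :=
  ∃ c : ℝ, 0 < c ∧ ∀ z ∈ Finset.Icc 1 J, ∀ᵐ ω ∂P, c ≤ pscore P X S J z ω

/-!
Pad `S_1(ω), …, S_J(ω)` with `S_0 = 0` and `S_{J+1} = 1`, the conventions of `pscore`. Under
monotonicity this `0/1` sequence is a step function jumping at a single index `k ∈ {1, …, J+1}`,
so `G(ω) = J + 1 - k` and `1(G = g) = S_{J-g+1} - S_{J-g}` pointwise almost surely. Conditioning
on `X` gives `e_g = p_{J-g+1} - p_{J-g}`, and summing over `g` telescopes to `p_z = ∑ e_g`.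
-/

open Finset

lemma exists_threshold_of_monotoneOn {a : ℕ → ℝ} {n : ℕ} (h01 : ∀ z ≤ n, a z = 0 ∨ a z = 1)
    (ha : MonotoneOn a (Set.Iic n)) (hn : a n = 1) :
    ∃ k ≤ n, ∀ z ≤ n, a z = if k ≤ z then 1 else 0 := by
  have hex : ∃ k, k ≤ n ∧ a k = 1 := ⟨n, le_rfl, hn⟩
  refine ⟨Nat.find hex, (Nat.find_spec hex).1, fun z hz => ?_⟩
  split_ifs with hkz
  · have hle : a (Nat.find hex) ≤ a z :=
      ha (Set.mem_Iic.2 (Nat.find_spec hex).1) (Set.mem_Iic.2 hz) hkz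
    rcases h01 z hz with h | h <;> linarith [(Nat.find_spec hex).2]
  · have hne : ¬(z ≤ n ∧ a z = 1) := Nat.find_min hex (not_le.1 hkz)
    exact (h01 z hz).resolve_right fun h => hne ⟨hz, h⟩

lemma ite_sum_threshold_eq_sub {J g k : ℕ} (hg : g ≤ J) (hk1 : 1 ≤ k) (hkJ : k ≤ J + 1) :
    (if ∑ z ∈ Icc 1 J, (if k ≤ z then (1 : ℝ) else 0) = g then (1 : ℝ) else 0) =
      (if k ≤ J - g + 1 then (1 : ℝ) else 0) - (if k ≤ J - g then 1 else 0) := by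
  have hfilter : {z ∈ Icc 1 J | k ≤ z} = Icc k J := by
    ext z; simp only [mem_filter, mem_Icc]; omega
  simp only [sum_boole, hfilter, Nat.card_Icc, Nat.cast_inj]
  split_ifs <;> first | omega | norm_num

lemma ite_sum_eq_sub_of_monotoneOn {a : ℕ → ℝ} {J g : ℕ} (hg : g ≤ J)
    (h01 : ∀ z ≤ J + 1, a z = 0 ∨ a z = 1) (ha : MonotoneOn a (Set.Iic (J + 1)))
    (ha0 : a 0 = 0) (haJ : a (J + 1) = 1) :
    (if ∑ z ∈ Icc 1 J, a z = g then (1 : ℝ) else 0) = a (J - g + 1) - a (J - g) := by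
  obtain ⟨k, hkJ, hk⟩ := exists_threshold_of_monotoneOn h01 ha haJ
  have hk1 : 1 ≤ k := by
    by_contra! h
    simp [hk 0 (Nat.zero_le _), Nat.lt_one_iff.1 h] at ha0
  rw [sum_congr rfl fun z hz => hk z (by simp only [mem_Icc] at hz; omega),
    hk _ (by omega), hk _ (by omega)]
  exact ite_sum_threshold_eq_sub hg hk1 hkJ

lemma sum_Icc_reflect_sub (F : ℕ → ℝ) {J z : ℕ} (hz : z ≤ J) :
    ∑ g ∈ Icc (J - z + 1) J, (F (J - g + 1) - F (J - g)) = F z - F 0 := by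
  rw [← Ico_add_one_right_eq_Icc, sum_Ico_reflect (fun j => F (j + 1) - F j) _ le_rfl,
    Nat.sub_self, show J + 1 - (J - z + 1) = z by omega, ← range_eq_Ico, sum_range_sub]

def Sext (J : ℕ) (S : ℕ → Ω → ℝ) (z : ℕ) : Ω → ℝ :=
  if z = 0 then fun _ => 0 else if z = J + 1 then fun _ => 1 else S z

section Sext

variable {P : Measure Ω} {J : ℕ} {X : Ω → 𝒳} {S : ℕ → Ω → ℝ}

omit [MeasurableSpace Ω] in
lemma Sext_of_mem_Icc {z : ℕ} (hz : z ∈ Icc 1 J) : Sext J S z = S z := by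
  simp only [mem_Icc] at hz
  simp only [Sext, if_neg (show z ≠ 0 by omega), if_neg (show z ≠ J + 1 by omega)]

omit [MeasurableSpace Ω] in
lemma Sext_eq_zero_or_one (hS01 : ∀ z ω, S z ω = 0 ∨ S z ω = 1) (z : ℕ) (ω : Ω) :
    Sext J S z ω = 0 ∨ Sext J S z ω = 1 := by
  unfold Sext
  split_ifs <;> simp [hS01]

lemma integrable_Sext [IsFiniteMeasure P] (hSm : ∀ z, Measurable (S z))
    (hS01 : ∀ z ω, S z ω = 0 ∨ S z ω = 1) (z : ℕ) : Integrable (Sext J S z) P := by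
  have hmeas : Measurable (Sext J S z) := by
    unfold Sext
    split_ifs
    exacts [measurable_const, measurable_const, hSm z]
  refine (integrable_const (1 : ℝ)).mono' hmeas.aestronglyMeasurable (ae_of_all _ fun ω => ?_)
  rcases Sext_eq_zero_or_one (J := J) hS01 z ω with h | h <;> simp [h]

lemma pscore_eq_condExp_Sext [IsFiniteMeasure P] (hX : Measurable X) (z : ℕ) :
    pscore P X S J z = P[Sext J S z | mX X] := by
  unfold pscore Sext
  split_ifs
  · exact (condExp_zero (E := ℝ)).symm
  · exact (condExp_const hX.comap_le 1).symm
  · rfl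

lemma ae_monotoneOn_Sext (hS01 : ∀ z ω, S z ω = 0 ∨ S z ω = 1) (hmono : Monotonicity P J S) :
    ∀ᵐ ω ∂P, MonotoneOn (fun z => Sext J S z ω) (Set.Iic (J + 1)) := by
  have hchain : ∀ᵐ ω ∂P, ∀ z ∈ Icc 1 J, ∀ z' ∈ Icc 1 J, z' ≤ z → S z' ω ≤ S z ω := by
    simp only [Filter.eventually_all_finset, Filter.eventually_imp_distrib_left]
    exact hmono
  filter_upwards [hchain] with ω hω z' hz' z hz hle
  simp only [Set.mem_Iic] at hz' hz ⊢
  have h01 := Sext_eq_zero_or_one (J := J) hS01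
  by_cases h0 : z' = 0
  · subst h0
    rcases h01 z ω with h | h <;> rw [h] <;> simp [Sext]
  by_cases hJ : z = J + 1
  · subst hJ
    rcases h01 z' ω with h | h <;> rw [h] <;> simp [Sext]
  rw [Sext_of_mem_Icc (by simp only [mem_Icc]; omega),
    Sext_of_mem_Icc (by simp only [mem_Icc]; omega)]
  exact hω z (by simp only [mem_Icc]; omega) z' (by simp only [mem_Icc]; omega) hle

lemma indG_ae_eq_Sext_sub (hS01 : ∀ z ω, S z ω = 0 ∨ S z ω = 1) (hmono : Monotonicity P J S)
    {g : ℕ} (hg : g ≤ J) :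
    indG J S g =ᵐ[P] Sext J S (J - g + 1) - Sext J S (J - g) := by
  filter_upwards [ae_monotoneOn_Sext hS01 hmono] with ω hω
  have hG : Gsum J S ω = ∑ z ∈ Icc 1 J, Sext J S z ω :=
    sum_congr rfl fun z hz => (congrFun (Sext_of_mem_Icc hz) ω).symm
  simp only [indG, Set.indicator_apply, Set.mem_ofPred_eq, hG, Pi.sub_apply]
  exact ite_sum_eq_sub_of_monotoneOn hg (fun z _ => Sext_eq_zero_or_one hS01 z ω) hω
    (by simp [Sext]) (by simp [Sext])

end Sext

lemma eg_ae_eq_pscore_sub {P : Measure Ω} [IsFiniteMeasure P] {J : ℕ} {X : Ω → 𝒳}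
    {S : ℕ → Ω → ℝ} (hX : Measurable X) (hSm : ∀ z, Measurable (S z))
    (hS01 : ∀ z ω, S z ω = 0 ∨ S z ω = 1) (hmono : Monotonicity P J S) {g : ℕ} (hg : g ≤ J) :
    eg P X J S g =ᵐ[P] fun ω => pscore P X S J (J - g + 1) ω - pscore P X S J (J - g) ω := by
  rw [pscore_eq_condExp_Sext hX, pscore_eq_condExp_Sext hX]
  exact (condExp_congr_ae (indG_ae_eq_Sext_sub hS01 hmono hg)).trans
    (condExp_sub (integrable_Sext hSm hS01 _) (integrable_Sext hSm hS01 _) _)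

/-- Under monotonicity, `e_g(X) = p_{J−g+1}(X) − p_{J−g}(X)` a.s. for every
`g ∈ {0,…,J}`; equivalently, `p_z(X) = ∑_{g=J−z+1}^J e_g(X)` a.s. for every `z ∈ {1,…,J}`. -/
theorem statement1 (P : Measure Ω) [IsProbabilityMeasure P] (J : ℕ)
    (X : Ω → 𝒳) (Z : Ω → ℕ) (S Y : ℕ → Ω → ℝ)
    (hset : Setup P J X Z S Y)
    (hmono : Monotonicity P J S) :
    (∀ g ∈ Finset.Icc 0 J,
      eg P X J S g =ᵐ[P]
        fun ω => pscore P X S J (J - g + 1) ω - pscore P X S J (J - g) ω) ∧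
    (∀ z ∈ Finset.Icc 1 J,
      pscore P X S J z =ᵐ[P]
        fun ω => ∑ g ∈ Finset.Icc (J - z + 1) J, eg P X J S g ω) := by
  have hstrata : ∀ g ∈ Icc 0 J, eg P X J S g =ᵐ[P]
      fun ω => pscore P X S J (J - g + 1) ω - pscore P X S J (J - g) ω := fun g hg =>
    eg_ae_eq_pscore_sub hset.hX hset.hSm hset.hS01 hmono (mem_Icc.1 hg).2
  refine ⟨hstrata, fun z hz => ?_⟩
  have hall : ∀ᵐ ω ∂P, ∀ g ∈ Icc (J - z + 1) J,
      eg P X J S g ω = pscore P X S J (J - g + 1) ω - pscore P X S J (J - g) ω :=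
    (Filter.eventually_all_finset _).2 fun g hg =>
      hstrata g (by simp only [mem_Icc] at hg ⊢; omega)
  filter_upwards [hall] with ω hω
  rw [sum_congr rfl hω, sum_Icc_reflect_sub (pscore P X S J · ω) (mem_Icc.1 hz).2]
  simp [pscore]

end TruncationByDeath
end
end

section
/- Under randomization and monotonicity, for every g ∈ {1,...,J} and every bounded measurable h : 𝒳 → ℝ, E[(S·1(Z=J−g+1)/π_{J−g+1} − S·1(Z=J−g)/π_{J−g})·h(X)] = E[h(X)·1(G=g)], where for g = J the term S·1(Z=0)/π_0 is taken to be 0. -/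
open MeasureTheory ProbabilityTheory

noncomputable section

namespace TruncationByDeath

variable {Ω : Type*} {𝒳 : Type*} [MeasurableSpace Ω] [MeasurableSpace 𝒳]

/-- Weighted survival term `S·1(Z=w)/π_w`, with the convention that it is `0` for `w = 0`. -/
def wterm (P : Measure Ω) (J : ℕ) (Z : Ω → ℕ) (S : ℕ → Ω → ℝ) (w : ℕ) : Ω → ℝ :=
  if w = 0 then fun _ => 0
  else fun ω => Sobs J Z S ω * indic Z w ω / piZ P Z w

/-! Under monotonicity, the treatment levels under which a unit survives form a final segment
`{J - G + 1, …, J}` of `{1, …, J}`. Hence `S_w = 1(J < w + G)` a.s. for `1 ≤ w ≤ J`, and the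
right side is `0` at `w = 0`, matching the convention `S_0 = 0`; so `1(G = g)` is the difference
of these indicators at `w = J - g + 1` and `w = J - g`. By randomization,
`E[S·1(Z=w)/π_w · h(X)] = E[1(Z=w)]/π_w · E[S_w h(X)] = E[S_w h(X)]`, and the identity follows
by linearity. -/

open Finset

section MonotoneZeroOne

variable {s : ℕ → ℝ} {J w : ℕ}

theorem eq_one_iff_lt_add_card (h01 : ∀ z, s z = 0 ∨ s z = 1)
    (hs : MonotoneOn s (Set.Icc 1 J)) (hw : w ∈ Set.Icc 1 J) :
    s w = 1 ↔ J < w + #{z ∈ Icc 1 J | s z = 1} := by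
  obtain ⟨hw1, hwJ⟩ := hw
  constructor
  · intro hsw
    have hsub : Icc w J ⊆ {z ∈ Icc 1 J | s z = 1} := by
      intro z hz
      obtain ⟨hwz, hzJ⟩ := mem_Icc.mp hz
      have hle : s w ≤ s z := hs ⟨hw1, hwJ⟩ ⟨hw1.trans hwz, hzJ⟩ hwz
      have hsz : s z = 1 := (h01 z).resolve_left fun h => by linarith
      exact mem_filter.mpr ⟨mem_Icc.mpr ⟨hw1.trans hwz, hzJ⟩, hsz⟩
    have := card_le_card hsub
    rw [Nat.card_Icc] at this
    omega
  · intro hlt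
    by_contra hsw
    have hsw0 : s w = 0 := (h01 w).resolve_right hsw
    have hsub : {z ∈ Icc 1 J | s z = 1} ⊆ Ioc w J := by
      intro z hz
      obtain ⟨hz, hsz⟩ := mem_filter.mp hz
      obtain ⟨hz1, hzJ⟩ := mem_Icc.mp hz
      refine mem_Ioc.mpr ⟨lt_of_not_ge fun hzw => ?_, hzJ⟩
      have := hs ⟨hz1, hzJ⟩ ⟨hw1, hwJ⟩ hzw
      linarith
    have := card_le_card hsub
    rw [Nat.card_Ioc] at this
    omega

theorem eq_ite_lt_add_card (h01 : ∀ z, s z = 0 ∨ s z = 1)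
    (hs : MonotoneOn s (Set.Icc 1 J)) (hw : w ∈ Set.Icc 1 J) :
    s w = if J < w + #{z ∈ Icc 1 J | s z = 1} then 1 else 0 := by
  have key := eq_one_iff_lt_add_card h01 hs hw
  split_ifs with h
  · exact key.mpr h
  · exact (h01 w).resolve_right (mt key.mp h)

end MonotoneZeroOne

section Pointwise

variable {α : Type*} {J : ℕ} {Z : α → ℕ} {S : ℕ → α → ℝ}

/-- The principal stratum `G`, counted in `ℕ`. -/
def survivalCount (J : ℕ) (S : ℕ → α → ℝ) (ω : α) : ℕ := #{z ∈ Icc 1 J | S z ω = 1}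

theorem survivalCount_le (ω : α) : survivalCount J S ω ≤ J :=
  (card_filter_le _ _).trans (by simp)

theorem Gsum_eq_survivalCount (hS01 : ∀ z ω, S z ω = 0 ∨ S z ω = 1) (ω : α) :
    Gsum J S ω = survivalCount J S ω := by
  rw [survivalCount, ← sum_boole]
  refine sum_congr rfl fun z _ => ?_
  rcases hS01 z ω with h | h <;> simp [h]

theorem indG_eq_sub (hS01 : ∀ z ω, S z ω = 0 ∨ S z ω = 1) {g : ℕ} (hg : g ≤ J) (ω : α) :
    indG J S g ω = (if J < J - g + 1 + survivalCount J S ω then 1 else 0)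
      - (if J < J - g + survivalCount J S ω then 1 else 0) := by
  have := survivalCount_le (J := J) (S := S) ω
  simp only [indG, Set.indicator_apply, Set.mem_ofPred_eq, Gsum_eq_survivalCount hS01,
    Nat.cast_inj]
  split_ifs <;> first | omega | norm_num

theorem indic_eq_indicator (w : ℕ) :
    indic Z w = Set.indicator (Z ⁻¹' {w}) fun _ => 1 := by
  ext ω
  by_cases hz : Z ω = w <;> simp [indic, hz]

theorem Sobs_mul_indic {w : ℕ} (hw : w ∈ Icc 1 J) (ω : α) :
    Sobs J Z S ω * indic Z w ω = indic Z w ω * S w ω := by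
  by_cases hz : Z ω = w
  · rw [Sobs, sum_eq_single_of_mem w hw fun z _ hzw => by simp [indic, hz, Ne.symm hzw]]
    simp [indic, hz]
  · simp [indic, hz]

end Pointwise

variable {P : Measure Ω} {J : ℕ} {X : Ω → 𝒳} {Z : Ω → ℕ} {S Y : ℕ → Ω → ℝ}

theorem measurable_survivalCount (hSm : ∀ z, Measurable (S z)) :
    Measurable (survivalCount J S) := by
  have hsum : survivalCount J S = fun ω => ∑ z ∈ Icc 1 J, if S z ω = 1 then 1 else 0 :=
    funext fun ω => card_filter _ _
  rw [hsum]
  exact Finset.measurable_sum _ fun z _ =>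
    Measurable.ite ((hSm z) (measurableSet_singleton 1)) measurable_const measurable_const

theorem Monotonicity.ae_monotoneOn (hmono : Monotonicity P J S) :
    ∀ᵐ ω ∂P, MonotoneOn (fun z => S z ω) (Set.Icc 1 J) := by
  simp only [MonotoneOn, ae_all_iff, Filter.eventually_imp_distrib_left]
  intro a ha b hb hab
  exact hmono b (by simpa using hb) a (by simpa using ha) hab

theorem measurable_indic (hZ : Measurable Z) (w : ℕ) : Measurable (indic Z w) :=
  (measurable_of_countable fun n : ℕ => if n = w then (1 : ℝ) else 0).comp hZ

theorem integral_indic (hZ : Measurable Z) (w : ℕ) : ∫ ω, indic Z w ω ∂P = piZ P Z w := by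
  rw [indic_eq_indicator, integral_indicator_const _ (hZ (measurableSet_singleton w)),
    smul_eq_mul, mul_one]
  rfl

theorem integral_indic_mul_of_indepFun {F : Ω → ℝ} (hZ : Measurable Z)
    (hF : AEStronglyMeasurable F P) (hZF : IndepFun Z F P) (w : ℕ) :
    ∫ ω, indic Z w ω * F ω ∂P = piZ P Z w * ∫ ω, F ω ∂P := by
  have hind : IndepFun (indic Z w) F P :=
    hZF.comp (measurable_of_countable fun n : ℕ => if n = w then (1 : ℝ) else 0) measurable_id
  rw [← integral_indic hZ w]
  exact hind.integral_mul_eq_mul_integral (measurable_indic hZ w).aestronglyMeasurable hF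

theorem wterm_eq {w : ℕ} (hw : w ∈ Icc 1 J) :
    wterm P J Z S w = fun ω => (piZ P Z w)⁻¹ * (indic Z w ω * S w ω) := by
  have hw0 : w ≠ 0 := by have := (mem_Icc.mp hw).1; omega
  ext ω
  rw [wterm, if_neg hw0, div_eq_inv_mul, Sobs_mul_indic hw]

theorem integrable_wterm_mul (hZ : Measurable Z) (hSm : ∀ z, Measurable (S z))
    (hS01 : ∀ z ω, S z ω = 0 ∨ S z ω = 1) {w : ℕ} (hw : w ≤ J) {f : Ω → ℝ}
    (hf : Integrable f P) : Integrable (fun ω => wterm P J Z S w ω * f ω) P := by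
  rcases Nat.eq_zero_or_pos w with rfl | hw0
  · simp [wterm]
  rw [wterm_eq (mem_Icc.mpr ⟨hw0, hw⟩)]
  simp_rw [mul_assoc (piZ P Z w)⁻¹]
  refine (hf.bdd_mul (c := 1) ((measurable_indic hZ w).mul (hSm w)).aestronglyMeasurable
    (ae_of_all _ fun ω => ?_)).const_mul _
  rcases hS01 w ω with h | h <;> by_cases hz : Z ω = w <;> simp [indic, h, hz]

theorem integral_wterm_mul (hset : Setup P J X Z S Y) (hrand : Randomization P J X Z S Y)
    {w : ℕ} (hw : w ∈ Icc 1 J) {h : 𝒳 → ℝ} (hh : Measurable h) :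
    ∫ ω, wterm P J Z S w ω * h (X ω) ∂P = ∫ ω, S w ω * h (X ω) ∂P := by
  have hZF : IndepFun Z (fun ω => S w ω * h (X ω)) P :=
    hrand.1.comp measurable_id
      (((measurable_pi_apply w).comp (measurable_fst.comp measurable_snd)).mul
        (hh.comp measurable_fst))
  simp_rw [wterm_eq hw, mul_assoc, integral_const_mul]
  rw [integral_indic_mul_of_indepFun (F := fun ω => S w ω * h (X ω)) hset.hZ
    ((hset.hSm w).mul (hh.comp hset.hX)).aestronglyMeasurable hZF,
    inv_mul_cancel_left₀ (hrand.2 w hw).ne']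

theorem integral_wterm_mul_eq_integral_mul_ite (hset : Setup P J X Z S Y)
    (hrand : Randomization P J X Z S Y) (hmono : Monotonicity P J S) {w : ℕ} (hw : w ≤ J)
    {h : 𝒳 → ℝ} (hh : Measurable h) :
    ∫ ω, wterm P J Z S w ω * h (X ω) ∂P
      = ∫ ω, h (X ω) * (if J < w + survivalCount J S ω then 1 else 0) ∂P := by
  rcases Nat.eq_zero_or_pos w with rfl | hw0
  · have hnot : ∀ ω, ¬ J < survivalCount J S ω := fun ω => by
      have := survivalCount_le (J := J) (S := S) ω
      omega
    simp [wterm, hnot]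
  rw [integral_wterm_mul hset hrand (mem_Icc.mpr ⟨hw0, hw⟩) hh]
  refine integral_congr_ae ?_
  filter_upwards [hmono.ae_monotoneOn] with ω hω
  rw [mul_comm, eq_ite_lt_add_card (hset.hS01 · ω) hω ⟨hw0, hw⟩, survivalCount]

/-- Under randomization and monotonicity, for every `g ∈ {1,…,J}` and every
bounded measurable `h`,
`E[(S·1(Z=J−g+1)/π_{J−g+1} − S·1(Z=J−g)/π_{J−g})·h(X)] = E[h(X)·1(G=g)]`,
with the convention that the term `S·1(Z=0)/π_0` is `0` (case `g = J`). -/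
theorem statement2 (P : Measure Ω) [IsProbabilityMeasure P] (J : ℕ)
    (X : Ω → 𝒳) (Z : Ω → ℕ) (S Y : ℕ → Ω → ℝ)
    (hset : Setup P J X Z S Y)
    (hrand : Randomization P J X Z S Y)
    (hmono : Monotonicity P J S) :
    ∀ g ∈ Finset.Icc 1 J, ∀ h : 𝒳 → ℝ, Measurable h → (∃ C, ∀ x, |h x| ≤ C) →
      ∫ ω, (wterm P J Z S (J - g + 1) ω - wterm P J Z S (J - g) ω) * h (X ω) ∂P
        = ∫ ω, h (X ω) * indG J S g ω ∂P := by
  intro g hg h hh ⟨C, hC⟩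
  obtain ⟨hg1, hgJ⟩ := mem_Icc.mp hg
  have hhX : Integrable (fun ω => h (X ω)) P :=
    .of_bound (hh.comp hset.hX).aestronglyMeasurable C (ae_of_all _ fun ω => hC (X ω))
  have hsurv (w : ℕ) :
      Integrable (fun ω => h (X ω) * if J < w + survivalCount J S ω then 1 else 0) P :=
    hhX.mul_bdd (c := 1)
      ((measurable_of_countable fun n : ℕ => if J < w + n then (1 : ℝ) else 0).comp
        (measurable_survivalCount hset.hSm)).aestronglyMeasurable
      (ae_of_all _ fun ω => by split_ifs <;> simp)
  have hwterm (w : ℕ) (hw : w ≤ J) :=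
    integrable_wterm_mul hset.hZ hset.hSm hset.hS01 hw hhX
  calc _ = ∫ ω, wterm P J Z S (J - g + 1) ω * h (X ω) ∂P
        - ∫ ω, wterm P J Z S (J - g) ω * h (X ω) ∂P := by
        simp_rw [sub_mul]
        exact integral_sub (hwterm _ (by omega)) (hwterm _ (by omega))
    _ = ∫ ω, h (X ω) * (if J < J - g + 1 + survivalCount J S ω then 1 else 0) ∂P
        - ∫ ω, h (X ω) * (if J < J - g + survivalCount J S ω then 1 else 0) ∂P := by
        rw [integral_wterm_mul_eq_integral_mul_ite hset hrand hmono (by omega) hh,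
          integral_wterm_mul_eq_integral_mul_ite hset hrand hmono (by omega) hh]
    _ = ∫ ω, h (X ω) * indG J S g ω ∂P := by
        rw [← integral_sub (hsurv _) (hsurv _)]
        simp_rw [indG_eq_sub hset.hS01 hgJ, mul_sub]

end TruncationByDeath
end
end

section
/- Assume monotonicity and principal ignorability. Then for every z ∈ {1,...,J} and every g ∈ {J−z+1,...,J}, E[Y_z·1(G=g) | σ(X)]·p_z(X) = E[Y_z·S_z | σ(X)]·e_g(X) P-almost surely; that is, on the event {e_g(X) > 0, p_z(X) > 0} the conditional mean of Y_z within stratum g given X coincides with E[Y_z·S_z | σ(X)]/p_z(X). -/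
/-!
Under monotonicity the survivors of `{1, …, J}` form a final segment, so `S_z = 1` exactly when
`G ≥ J - z + 1`; that is, `S_z = ∑_{g ≥ J-z+1} 1(G = g)` almost surely. Taking conditional
expectations gives `p_z = ∑_{g'} e_{g'}` and `E[Y_z S_z | X] = ∑_{g'} E[Y_z 1(G = g') | X]`, and
principal ignorability, summed over `g'`, turns the first identity into the second.
-/

open MeasureTheory ProbabilityTheory

noncomputable section

namespace TruncationByDeath

variable {Ω : Type*} {𝒳 : Type*} [MeasurableSpace Ω] [MeasurableSpace 𝒳]

open Filter Finset

theorem mem_iff_sub_lt_card_of_upward_closed {T : Finset ℕ} {J z : ℕ} (hT : T ⊆ Icc 1 J)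
    (hup : ∀ a ∈ T, ∀ b ≤ J, a ≤ b → b ∈ T) (hz : z ∈ Icc 1 J) : z ∈ T ↔ J - z < #T := by
  rw [mem_Icc] at hz
  constructor
  · intro hzT
    have hsub : Icc z J ⊆ T := fun b hb => hup z hzT b (mem_Icc.1 hb).2 (mem_Icc.1 hb).1
    have := card_le_card hsub
    rw [Nat.card_Icc] at this
    omega
  · intro hcard
    by_contra hzT
    have hsub : T ⊆ Icc (z + 1) J := by
      intro a ha
      have ha' := mem_Icc.1 (hT ha)
      refine mem_Icc.2 ⟨?_, ha'.2⟩
      by_contra hle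
      exact hzT (hup a ha z hz.2 (by omega))
    have := card_le_card hsub
    rw [Nat.card_Icc] at this
    omega

section Pointwise

variable {α : Type*} {J : ℕ} {S : ℕ → α → ℝ} {ω : α}

theorem gsum_eq_card_filter (h01 : ∀ z, S z ω = 0 ∨ S z ω = 1) :
    Gsum J S ω = #{z ∈ Icc 1 J | S z ω = 1} := by
  rw [card_filter, Nat.cast_sum]
  refine sum_congr rfl fun z _ => ?_
  rcases h01 z with h | h <;> simp [h]

theorem sum_indG_eq_ite {n : ℕ} (hG : Gsum J S ω = n) (A : Finset ℕ) :
    ∑ g ∈ A, indG J S g ω = if n ∈ A then 1 else 0 := by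
  simp [indG, Set.indicator_apply, hG]

theorem survival_eq_sum_indG (h01 : ∀ z, S z ω = 0 ∨ S z ω = 1)
    (hmono : ∀ a ∈ Icc 1 J, ∀ b ∈ Icc 1 J, a ≤ b → S a ω ≤ S b ω) {z : ℕ} (hz : z ∈ Icc 1 J) :
    S z ω = ∑ g ∈ Icc (J - z + 1) J, indG J S g ω := by
  have hup : ∀ a ∈ {z ∈ Icc 1 J | S z ω = 1}, ∀ b ≤ J, a ≤ b → b ∈ {z ∈ Icc 1 J | S z ω = 1} := by
    intro a ha b hbJ hab
    obtain ⟨ha, ha1⟩ := mem_filter.1 ha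
    have hb : b ∈ Icc 1 J := mem_Icc.2 ⟨(mem_Icc.1 ha).1.trans hab, hbJ⟩
    refine mem_filter.2 ⟨hb, ?_⟩
    have := hmono a ha b hb hab
    rcases h01 b with h | h <;> linarith
  have hmem := mem_iff_sub_lt_card_of_upward_closed (filter_subset _ _) hup hz
  have hcard : #{z ∈ Icc 1 J | S z ω = 1} ≤ J := by
    simpa using card_le_card (filter_subset (fun z => S z ω = 1) (Icc 1 J))
  rw [sum_indG_eq_ite (gsum_eq_card_filter h01)]
  rcases h01 z with h | h
  · have hlt : ¬J - z < #{z ∈ Icc 1 J | S z ω = 1} := hmem.not.1 (by simp [h])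
    rw [if_neg (by rw [mem_Icc]; omega), h]
  · have hlt : J - z < #{z ∈ Icc 1 J | S z ω = 1} := hmem.1 (by simp [h, hz])
    rw [if_pos (mem_Icc.2 (by omega)), h]

end Pointwise

section Conditional

variable {P : Measure Ω} {J : ℕ} {S : ℕ → Ω → ℝ}

theorem measurableSet_gsum_eq (hS : ∀ z, Measurable (S z)) (g : ℕ) :
    MeasurableSet {ω | Gsum J S ω = g} :=
  Finset.measurable_fun_sum _ (fun z _ => hS z) (measurableSet_singleton _)

theorem integrable_indG [IsFiniteMeasure P] (hS : ∀ z, Measurable (S z)) (g : ℕ) :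
    Integrable (indG J S g) P :=
  (integrable_const 1).indicator (measurableSet_gsum_eq hS g)

theorem integrable_mul_indG {f : Ω → ℝ} (hf : Integrable f P) (hS : ∀ z, Measurable (S z))
    (g : ℕ) : Integrable (fun ω => f ω * indG J S g ω) P := by
  simpa [indG, ← Set.indicator_mul_right] using hf.indicator (measurableSet_gsum_eq hS g)

theorem Monotonicity.ae_forall (hmono : Monotonicity P J S) :
    ∀ᵐ ω ∂P, ∀ a ∈ Icc 1 J, ∀ b ∈ Icc 1 J, a ≤ b → S a ω ≤ S b ω :=
  (eventually_all_finset _).2 fun a ha => (eventually_all_finset _).2 fun b hb =>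
    eventually_imp_distrib_left.2 fun hab => hmono b hb a ha hab

theorem survival_ae_eq_sum_indG (h01 : ∀ z ω, S z ω = 0 ∨ S z ω = 1)
    (hmono : Monotonicity P J S) {z : ℕ} (hz : z ∈ Icc 1 J) :
    S z =ᵐ[P] ∑ g ∈ Icc (J - z + 1) J, indG J S g := by
  filter_upwards [hmono.ae_forall] with ω hω
  rw [Finset.sum_apply]
  exact survival_eq_sum_indG (h01 · ω) hω hz

theorem pscore_ae_eq_sum_eg [IsFiniteMeasure P] {X : Ω → 𝒳} (hS : ∀ z, Measurable (S z))
    (h01 : ∀ z ω, S z ω = 0 ∨ S z ω = 1) (hmono : Monotonicity P J S) {z : ℕ}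
    (hz : z ∈ Icc 1 J) : pscore P X S J z =ᵐ[P] ∑ g ∈ Icc (J - z + 1) J, eg P X J S g := by
  have hz' := mem_Icc.1 hz
  rw [pscore, if_neg (by omega), if_neg (by omega)]
  exact (condExp_congr_ae (survival_ae_eq_sum_indG h01 hmono hz)).trans
    (condExp_finsetSum (fun g _ => integrable_indG hS g) _)

theorem condExp_mul_survival_ae_eq_sum {X : Ω → 𝒳} {Y : Ω → ℝ} (hY : Integrable Y P)
    (hS : ∀ z, Measurable (S z)) (h01 : ∀ z ω, S z ω = 0 ∨ S z ω = 1)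
    (hmono : Monotonicity P J S) {z : ℕ} (hz : z ∈ Icc 1 J) :
    P[fun ω => Y ω * S z ω | mX X] =ᵐ[P]
      ∑ g ∈ Icc (J - z + 1) J, P[fun ω => Y ω * indG J S g ω | mX X] := by
  have hsplit : (fun ω => Y ω * S z ω) =ᵐ[P]
      ∑ g ∈ Icc (J - z + 1) J, fun ω => Y ω * indG J S g ω := by
    filter_upwards [survival_ae_eq_sum_indG h01 hmono hz] with ω hω
    rw [hω, Finset.sum_apply, Finset.sum_apply, mul_sum]
  exact (condExp_congr_ae hsplit).trans
    (condExp_finsetSum (fun g _ => integrable_mul_indG hY hS g) _)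

end Conditional

/-- Under monotonicity and principal ignorability, for every `z ∈ {1,…,J}`
and `g ∈ {J−z+1,…,J}`,
`E[Y_z·1(G=g) | σ(X)] · p_z(X) = E[Y_z·S_z | σ(X)] · e_g(X)` `P`-almost surely. -/
theorem statement4 (P : Measure Ω) [IsProbabilityMeasure P] (J : ℕ)
    (X : Ω → 𝒳) (Z : Ω → ℕ) (S Y : ℕ → Ω → ℝ)
    (hset : Setup P J X Z S Y)
    (hmono : Monotonicity P J S)
    (hPI : PrincipalIgnorability P J X S Y) :
    ∀ z ∈ Finset.Icc 1 J, ∀ g ∈ Finset.Icc (J - z + 1) J,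
      (fun ω => (P[fun ω' => Y z ω' * indG J S g ω' | mX X]) ω * pscore P X S J z ω)
        =ᵐ[P] fun ω => (P[fun ω' => Y z ω' * S z ω' | mX X]) ω * eg P X J S g ω := by
  intro z hz g hg
  have hPI_all := (eventually_all_finset _).2 fun g' hg' => hPI z hz g hg g' hg'
  filter_upwards [pscore_ae_eq_sum_eg (X := X) hset.hSm hset.hS01 hmono hz,
    condExp_mul_survival_ae_eq_sum (X := X) (hset.hYint z) hset.hSm hset.hS01 hmono hz,
    hPI_all] with ω hp hYS hPIω
  rw [hp, hYS, Finset.sum_apply, Finset.sum_apply, mul_sum, sum_mul]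
  exact sum_congr rfl hPIω

end TruncationByDeath
end
end
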